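/- arXiv:1708.04350 — 3 statements merged into one kernel-verified Lean document; each statement's English description precedes it below -/
import Mathlib

section
/- Let H be a (d,m)-graph with edge set E, and let F be a uniformly random subset of E. Then the probability that F contains no (d+1)-clique of H is at most (1 − 2^{−(d+1)})^{m^d}. -/
/-!
The tuples `v : Fin (d+1) → Fin m` with `∑ i, v i = 0` in `ℤ/m` index `m ^ d` cliques that are
pairwise edge-disjoint: two cliques sharing an edge come from tuples agreeing off one coordinate,
and a zero-sum tuple is determined by all but one of its coordinates. A uniformly random `F`
contains each of these disjoint cliques independently with probability `2⁻¹ ^ (d+1)`, so it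
avoids all of them with probability `(1 - 2⁻¹ ^ (d+1)) ^ (m ^ d)`.
-/

open Finset

section Avoidance

variable {α ι : Type*} [DecidableEq α]

lemma card_filter_powerset_le_of_not_superset (E S : Finset α) {P Q : Finset α → Prop}
    [DecidablePred P] [DecidablePred Q] (hPQ : ∀ F, P F → ¬ S ⊆ F ∧ Q (F \ S)) :
    #{F ∈ E.powerset | P F} ≤ (2 ^ #S - 1) * #{G ∈ (E \ S).powerset | Q G} := by
  have hproper : #(S.powerset.erase S) = 2 ^ #S - 1 := by
    rw [card_erase_of_mem (mem_powerset_self S), card_powerset]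
  rw [← hproper, ← card_product]
  refine card_le_card_of_injOn (fun F => (F ∩ S, F \ S)) (fun F hF => ?_) ?_
  · rw [mem_coe, mem_filter, mem_powerset] at hF
    obtain ⟨hFS, hQ⟩ := hPQ F hF.2
    rw [mem_coe, mem_product, mem_erase, mem_powerset, mem_filter, mem_powerset]
    exact ⟨⟨fun h => hFS (h ▸ inter_subset_left), inter_subset_right⟩,
      sdiff_subset_sdiff hF.1 subset_rfl, hQ⟩
  · intro F _ G _ h
    simp only [Prod.mk.injEq] at h
    rw [← sdiff_union_inter F S, ← sdiff_union_inter G S, h.1, h.2]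

-- Disjoint events `S v ⊆ F` are independent, each of probability `2⁻¹ ^ k`.
theorem card_filter_powerset_forall_not_superset_div_le {E : Finset α} {I : Finset ι}
    {S : ι → Finset α} {k : ℕ} (hSE : ∀ v ∈ I, S v ⊆ E) (hS : (I : Set ι).PairwiseDisjoint S)
    (hk : ∀ v ∈ I, #(S v) = k) :
    (#{F ∈ E.powerset | ∀ v ∈ I, ¬ S v ⊆ F} : ℝ) / 2 ^ #E ≤ (1 - 1 / 2 ^ k) ^ #I := by
  classical
  induction I using Finset.induction_on generalizing E with
  | empty => simp
  | @insert a I ha ih =>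
    have hSaE := hSE a (mem_insert_self a I)
    have hB := ih (E := E \ S a)
      (fun v hv => subset_sdiff.2 ⟨hSE v (mem_insert_of_mem hv),
        hS (mem_insert_of_mem hv) (mem_insert_self a I) (ne_of_mem_of_not_mem hv ha)⟩)
      (hS.subset (by simp)) (fun v hv => hk v (mem_insert_of_mem hv))
    have hA := card_filter_powerset_le_of_not_superset E (S a)
      (P := fun F => ∀ v ∈ insert a I, ¬ S v ⊆ F) (Q := fun G => ∀ v ∈ I, ¬ S v ⊆ G)
      (fun F hF => ⟨hF a (mem_insert_self a I),
        fun v hv hsub => hF v (mem_insert_of_mem hv) (hsub.trans sdiff_subset)⟩)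
    rw [hk a (mem_insert_self a I)] at hA
    have hsplit : (2 : ℝ) ^ #E = 2 ^ #(E \ S a) * 2 ^ k := by
      rw [← hk a (mem_insert_self a I), ← pow_add, card_sdiff_add_card_eq_card hSaE]
    have hk1 : ((2 ^ k - 1 : ℕ) : ℝ) = 2 ^ k - 1 := by
      rw [Nat.cast_sub Nat.one_le_two_pow]; push_cast; ring
    calc (#{F ∈ E.powerset | ∀ v ∈ insert a I, ¬ S v ⊆ F} : ℝ) / 2 ^ #E
        ≤ (2 ^ k - 1) * #{G ∈ (E \ S a).powerset | ∀ v ∈ I, ¬ S v ⊆ G} / 2 ^ #E := by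
          rw [← hk1]; gcongr; exact_mod_cast hA
      _ = (1 - 1 / 2 ^ k) *
            (#{G ∈ (E \ S a).powerset | ∀ v ∈ I, ¬ S v ⊆ G} / 2 ^ #(E \ S a)) := by
          rw [hsplit]; field_simp
      _ ≤ (1 - 1 / 2 ^ k) * (1 - 1 / 2 ^ k) ^ #I := by
          gcongr
          rw [sub_nonneg]; exact div_le_one_of_le₀ (one_le_pow₀ one_le_two) (by positivity)
      _ = (1 - 1 / 2 ^ k) ^ #(insert a I) := by rw [card_insert_of_notMem ha, pow_succ']

end Avoidance

section ZeroSum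

variable {ι G : Type*} [Fintype ι] [DecidableEq ι] [AddCommGroup G]

lemma eq_of_sum_eq_of_forall_ne_eq {v w : ι → G} (i : ι) (hsum : ∑ j, v j = ∑ j, w j)
    (h : ∀ j ≠ i, v j = w j) : v = w := by
  funext j
  by_cases hji : j = i
  · subst hji
    rw [← add_sum_erase _ _ (mem_univ j), ← add_sum_erase _ _ (mem_univ j),
      sum_congr rfl fun l hl => h l (ne_of_mem_erase hl)] at hsum
    exact add_right_cancel hsum
  · exact h j hji

lemma card_filter_sum_eq_zero [Fintype G] [DecidableEq G] (n : ℕ) :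
    #{v : Fin (n + 1) → G | ∑ i, v i = 0} = Fintype.card G ^ n := by
  suffices #{v : Fin (n + 1) → G | ∑ i, v i = 0} = #(univ : Finset (Fin n → G)) by
    simpa using this
  refine card_nbij' (t := (univ : Finset (Fin n → G))) Fin.tail
    (fun t => Fin.cons (-∑ i, t i) t) (fun _ _ => mem_coe.2 (mem_univ _))
    (fun t _ => ?_) (fun v hv => ?_) (fun t _ => Fin.tail_cons _ _)
  · simp [Fin.sum_univ_succ]
  · rw [mem_coe, mem_filter, Fin.sum_univ_succ] at hv
    change Fin.cons (-∑ i : Fin n, v i.succ) (Fin.tail v) = v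
    rw [← eq_neg_iff_add_eq_zero.2 hv.2]
    exact Fin.cons_self_tail v

end ZeroSum

namespace CompletePartiteHypergraph

section Cliques

variable {ι β : Type*} [Fintype ι] [DecidableEq ι] [DecidableEq β]

def transversal (v : ι → β) : Finset (ι × β) :=
  univ.image fun j => (j, v j)

def clique (v : ι → β) : Finset (Finset (ι × β)) :=
  univ.image fun i => (transversal v).erase (i, v i)

lemma mem_transversal {v : ι → β} {p : ι × β} : p ∈ transversal v ↔ p.2 = v p.1 := by
  simp only [transversal, mem_image, mem_univ, true_and]
  exact ⟨by rintro ⟨j, rfl⟩; rfl, fun h => ⟨p.1, Prod.ext rfl h.symm⟩⟩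

lemma card_transversal (v : ι → β) : #(transversal v) = Fintype.card ι :=
  card_image_of_injective _ fun _ _ h => congrArg Prod.fst h

lemma mem_erase_transversal {v : ι → β} {i j : ι} (hji : j ≠ i) :
    (j, v j) ∈ (transversal v).erase (i, v i) :=
  mem_erase.2 ⟨fun h => hji (congrArg Prod.fst h), mem_transversal.2 rfl⟩

lemma card_filter_fst_eq_le_one {v : ι → β} {e : Finset (ι × β)} (he : e ⊆ transversal v)
    (i : ι) : #{x ∈ e | x.1 = i} ≤ 1 :=
  card_le_one.2 fun x hx y hy => by
    rw [mem_filter] at hx hy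
    exact Prod.ext (hx.2.trans hy.2.symm) (by
      rw [mem_transversal.1 (he hx.1), mem_transversal.1 (he hy.1), hx.2, hy.2])

lemma clique_subset [Fintype β] (v : ι → β) :
    clique v ⊆ {e ∈ (univ : Finset (ι × β)).powerset |
      #e = Fintype.card ι - 1 ∧ ∀ i, #{x ∈ e | x.1 = i} ≤ 1} := by
  intro e he
  obtain ⟨i, -, rfl⟩ := mem_image.1 he
  rw [mem_filter, card_erase_of_mem (mem_transversal.2 rfl), card_transversal]
  exact ⟨mem_powerset.2 (subset_univ _), rfl, card_filter_fst_eq_le_one (erase_subset _ _)⟩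

lemma card_clique (v : ι → β) : #(clique v) = Fintype.card ι := by
  refine card_image_of_injective _ fun i j hij => ?_
  by_contra hne
  have hj := mem_erase_transversal (v := v) (Ne.symm hne)
  rw [hij] at hj
  exact notMem_erase _ _ hj

lemma exists_forall_ne_eq_of_mem_clique {v w : ι → β} {e : Finset (ι × β)}
    (hv : e ∈ clique v) (hw : e ∈ clique w) : ∃ i, ∀ j ≠ i, v j = w j := by
  obtain ⟨i, -, rfl⟩ := mem_image.1 hv
  obtain ⟨i', -, he⟩ := mem_image.1 hw
  refine ⟨i, fun j hji => ?_⟩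
  have hj := mem_erase_transversal (v := v) hji
  rw [← he] at hj
  exact mem_transversal.1 (mem_of_mem_erase hj)

end Cliques

lemma exists_pairwiseDisjoint_clique {d : ℕ} (m : ℕ) (hd : 1 ≤ d) :
    ∃ I : Finset (Fin (d + 1) → Fin m), #I = m ^ d ∧
      (I : Set (Fin (d + 1) → Fin m)).PairwiseDisjoint clique := by
  rcases Nat.eq_zero_or_pos m with rfl | hm
  · exact ⟨∅, by simp [zero_pow (Nat.one_le_iff_ne_zero.1 hd)], by simp⟩
  · have : NeZero m := ⟨hm.ne'⟩
    refine ⟨({v | ∑ i, v i = 0} : Finset (Fin (d + 1) → Fin m)),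
      by rw [card_filter_sum_eq_zero, Fintype.card_fin], ?_⟩
    intro v hv w hw hvw
    refine disjoint_left.2 fun e hev hew => hvw ?_
    obtain ⟨i, hi⟩ := exists_forall_ne_eq_of_mem_clique hev hew
    rw [coe_filter, Set.mem_ofPred_eq] at hv hw
    exact eq_of_sum_eq_of_forall_ne_eq i (hv.2.trans hw.2.symm) hi

end CompletePartiteHypergraph

open CompletePartiteHypergraph in
/-- In a `(d,m)`-graph with edge set `Edges`, the probability that a uniformly random
subset `F` of the edges contains no `(d+1)`-clique is at most `(1 - 2⁻¹ ^ (d+1)) ^ (m ^ d)`. -/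
theorem stmt3 (d m : ℕ) (hd : 1 ≤ d) :
    let Edges := (Finset.univ : Finset (Fin (d+1) × Fin m)).powerset.filter
      (fun e => e.card = d ∧ ∀ i, (e.filter (fun x => x.1 = i)).card ≤ 1)
    ((Edges.powerset.filter (fun F => ¬ ∃ v : Fin (d+1) → Fin m,
        Finset.univ.image (fun i : Fin (d+1) =>
          (Finset.univ.image (fun j => (j, v j))).erase (i, v i)) ⊆ F)).card : ℝ)
      / 2 ^ Edges.card
      ≤ (1 - (1 : ℝ) / 2 ^ (d+1)) ^ (m ^ d) := by
  intro Edges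
  obtain ⟨I, hI, hdisj⟩ := exists_pairwiseDisjoint_clique m hd
  have hEdges (v : Fin (d + 1) → Fin m) : clique v ⊆ Edges := by
    simpa [Edges] using clique_subset v
  refine le_trans ?_ ((card_filter_powerset_forall_not_superset_div_le (S := clique)
    (fun v _ => hEdges v) hdisj fun v _ => by rw [card_clique, Fintype.card_fin]).trans_eq
      (by rw [hI]))
  gcongr with F
  exact fun hF v _ hv => hF ⟨v, hv⟩
end

section
/- For every n ≥ 2 and d ≥ 2, every (d,n)-graph admits a 2-coloring of its edges such that for m = ⌈25 (log n)^{1/(d−1)}⌉, every (d,m)-subgraph (induced by choosing m vertices in each part) contains a monochromatic (d+1)-clique in each of the two colors. -/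
/-!
Counting argument. Enumerate the chosen sets `P i` by `G = Fin m` and look at the `m ^ d`
transversals `(w 0 (a 0), …, w d (a d))` with `a 0 + ⋯ + a d = 0`. Any `d` coordinates of a
zero-sum tuple determine the last one, so the cliques on these transversals are pairwise
edge-disjoint, and exactly a `(1 - 2⁻¹ ^ (d + 1)) ^ m ^ d` fraction of all colourings has none of
them monochromatic in a given colour. A union bound over the at most `n ^ (m * (d + 1))`
enumerations and the two colours leaves a good colouring as soon as
`2 n ^ (m * (d + 1)) exp (-m ^ d / 2 ^ (d + 1)) < 1`, which `m ≥ 25 (log n) ^ (1 / (d - 1))`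
guarantees.
-/

open Finset Function Fintype Real

section TransversalEdge

variable {ι α : Type*} [Fintype ι] [DecidableEq ι] [DecidableEq α]

def transversalEdge (v : ι → α) (i : ι) : Finset (ι × α) :=
  (univ.image fun j => (j, v j)).erase (i, v i)

lemma mem_transversalEdge {v : ι → α} {i j : ι} {x : α} :
    (j, x) ∈ transversalEdge v i ↔ j ≠ i ∧ x = v j := by
  simp only [transversalEdge, mem_erase, mem_image, mem_univ, true_and, Prod.mk.injEq]
  constructor
  · rintro ⟨hne, k, rfl, rfl⟩
    exact ⟨fun hki => hne (by rw [hki]), rfl⟩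
  · rintro ⟨hji, rfl⟩
    exact ⟨fun h => hji (congrArg Prod.fst h), j, rfl, rfl⟩

lemma transversalEdge_eq_transversalEdge {v v' : ι → α} {i i' : ι}
    (h : transversalEdge v i = transversalEdge v' i') : i = i' ∧ ∀ j ≠ i, v j = v' j := by
  have hi : i = i' := by
    by_contra hne
    have hmem : (i', v i') ∈ transversalEdge v' i' := by
      rw [← h]; exact mem_transversalEdge.2 ⟨Ne.symm hne, rfl⟩
    exact (mem_transversalEdge.1 hmem).1 rfl
  subst hi
  refine ⟨rfl, fun j hj => ?_⟩
  have hmem : (j, v j) ∈ transversalEdge v' i := by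
    rw [← h]; exact mem_transversalEdge.2 ⟨hj, rfl⟩
  exact (mem_transversalEdge.1 hmem).2

end TransversalEdge

lemma eq_of_sum_eq_of_forall_ne {ι G : Type*} [Fintype ι] [DecidableEq ι] [AddCommGroup G]
    {a a' : ι → G} (i : ι) (hsum : ∑ j, a j = ∑ j, a' j) (h : ∀ j ≠ i, a j = a' j) :
    a = a' := by
  have hrest : ∑ j ∈ univ.erase i, a j = ∑ j ∈ univ.erase i, a' j :=
    sum_congr rfl fun j hj => h j (ne_of_mem_erase hj)
  have hi : a i = a' i := by
    rw [← add_sum_erase _ _ (mem_univ i), ← add_sum_erase _ _ (mem_univ i), hrest] at hsum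
    exact add_right_cancel hsum
  funext j
  by_cases hj : j = i
  · rw [hj, hi]
  · exact h j hj

section ZeroSum

variable {G : Type*} [AddCommGroup G] {d : ℕ}

def zeroSumExtend (f : Fin d → G) : Fin (d + 1) → G :=
  Fin.snoc f (-∑ i, f i)

lemma sum_zeroSumExtend (f : Fin d → G) : ∑ i, zeroSumExtend f i = 0 := by
  simp [zeroSumExtend, Fin.sum_univ_castSucc]

lemma zeroSumExtend_injective : Injective (zeroSumExtend : (Fin d → G) → Fin (d + 1) → G) :=
  fun f f' h => funext fun j => by
    simpa [zeroSumExtend] using congrFun h (Fin.castSucc j)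

end ZeroSum

def zeroSumClique {G α : Type*} [AddCommGroup G] {d : ℕ} (w : Fin (d + 1) → G ↪ α)
    (f : Fin d → G) : Fin (d + 1) → α :=
  fun j => w j (zeroSumExtend f j)

lemma transversalEdge_zeroSumClique_injective {G α : Type*} [AddCommGroup G] [DecidableEq α]
    {d : ℕ} (w : Fin (d + 1) → G ↪ α) :
    Injective fun p : (Fin d → G) × Fin (d + 1) =>
      transversalEdge (zeroSumClique w p.1) p.2 := by
  rintro ⟨f, i⟩ ⟨f', i'⟩ h
  obtain ⟨rfl, hagree⟩ := transversalEdge_eq_transversalEdge h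
  have : zeroSumExtend f = zeroSumExtend f' :=
    eq_of_sum_eq_of_forall_ne i (by rw [sum_zeroSumExtend, sum_zeroSumExtend])
      fun j hj => (w j).injective (hagree j hj)
  rw [zeroSumExtend_injective this]

lemma card_filter_comp_mem_mul_pow {D E β : Type*} [Fintype D] [Fintype E] [DecidableEq E]
    [Fintype β] [DecidableEq β] {g : D → E} (hg : Injective g) (S : Finset (D → β)) :
    #{χ : E → β | χ ∘ g ∈ S} * card β ^ card D = #S * card β ^ card E := by
  classical
  let C := {x : E // x ∉ Set.range g}
  let e : (E → β) ≃ (D → β) × (C → β) :=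
    (Equiv.piEquivPiSubtypeProd (· ∈ Set.range g) fun _ => β).trans
      ((Equiv.arrowCongr (Equiv.ofInjective g hg).symm (Equiv.refl β)).prodCongr (Equiv.refl _))
  have hfilter : #{χ : E → β | χ ∘ g ∈ S} = #(S ×ˢ (univ : Finset (C → β))) :=
    card_equiv e fun χ => by simp [e]; rfl
  have hC : card C + card D = card E := by
    have hR : card {x : E // x ∈ Set.range g} = card D := Set.card_range_of_injective hg
    rw [Fintype.card_subtype_compl, hR]
    have := card_le_of_injective g hg
    omega
  rw [hfilter, card_product, card_univ, Fintype.card_fun, mul_assoc, ← pow_add, hC]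

lemma card_forall_ne_const {ι κ β : Type*} [Fintype ι] [DecidableEq ι] [Fintype κ]
    [DecidableEq κ] [Fintype β] [DecidableEq β] (b : β) :
    #{F : ι × κ → β | ∀ a, (fun i => F (a, i)) ≠ fun _ => b}
      = (card β ^ card κ - 1) ^ card ι := by
  let e : {F : ι × κ → β // ∀ a, (fun i => F (a, i)) ≠ fun _ => b}
      ≃ (ι → {h : κ → β // h ≠ fun _ => b}) :=
    ((Equiv.curry ι κ β).subtypeEquiv fun _ => Iff.rfl).trans
      (Equiv.subtypePiEquivPi (p := fun _ h => h ≠ fun _ => b))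
  rw [← Fintype.card_subtype, Fintype.card_congr e, Fintype.card_fun, Fintype.card_subtype_compl,
    Fintype.card_subtype_eq, Fintype.card_fun]

lemma card_filter_forall_ne_const_mul_pow {ι κ E β : Type*} [Fintype ι] [DecidableEq ι]
    [Fintype κ] [DecidableEq κ] [Fintype E] [DecidableEq E] [Fintype β] [DecidableEq β]
    {g : ι × κ → E} (hg : Injective g) (b : β) :
    #{χ : E → β | ∀ a, (fun i => χ (g (a, i))) ≠ fun _ => b}
        * card β ^ (card ι * card κ)
      = (card β ^ card κ - 1) ^ card ι * card β ^ card E := by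
  rw [← card_forall_ne_const b, ← Fintype.card_prod, ← card_filter_comp_mem_mul_pow hg]
  simp only [mem_filter, mem_univ, true_and, comp_apply]

lemma exists_forall_not_of_sum_card_lt {Q X : Type*} [Fintype Q] [Fintype X]
    (p : Q → X → Prop) [∀ q, DecidablePred (p q)] (h : ∑ q, #{x | p q x} < card X) :
    ∃ x, ∀ q, ¬ p q x := by
  classical
  by_contra! hcover
  refine h.not_ge (le_trans ?_ card_biUnion_le)
  rw [← card_univ]
  exact card_le_card fun x _ => mem_biUnion.2 <| by simpa using hcover x

theorem exists_coloring_forall_zeroSumClique_monochromatic {G α : Type*} [AddCommGroup G]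
    [Fintype G] [Fintype α] [DecidableEq α] {d : ℕ}
    (h : 2 * card (G ↪ α) ^ (d + 1) * (2 ^ (d + 1) - 1) ^ card G ^ d
      < 2 ^ ((d + 1) * card G ^ d)) :
    ∃ χ : Finset (Fin (d + 1) × α) → Bool, ∀ (w : Fin (d + 1) → G ↪ α) (b : Bool),
      ∃ f, ∀ i, χ (transversalEdge (zeroSumClique w f) i) = b := by
  classical
  let bad (q : (Fin (d + 1) → G ↪ α) × Bool) (χ : Finset (Fin (d + 1) × α) → Bool) :
      Prop :=
    ∀ f, (fun i => χ (transversalEdge (zeroSumClique q.1 f) i)) ≠ fun _ => q.2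
  have hbad (q) : #{χ | bad q χ} * 2 ^ ((d + 1) * card G ^ d)
      = (2 ^ (d + 1) - 1) ^ card G ^ d * card (Finset (Fin (d + 1) × α) → Bool) := by
    rw [mul_comm (d + 1)]
    simpa using
      card_filter_forall_ne_const_mul_pow (transversalEdge_zeroSumClique_injective q.1) q.2
  obtain ⟨χ, hχ⟩ := exists_forall_not_of_sum_card_lt bad <| by
    refine Nat.lt_of_mul_lt_mul_right (a := 2 ^ ((d + 1) * card G ^ d)) ?_
    rw [sum_mul, sum_congr rfl fun q _ => hbad q, sum_const, card_univ, smul_eq_mul,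
      Fintype.card_prod, Fintype.card_fun, Fintype.card_fin, Fintype.card_bool]
    calc card (G ↪ α) ^ (d + 1) * 2 * ((2 ^ (d + 1) - 1) ^ card G ^ d * _)
        = 2 * card (G ↪ α) ^ (d + 1) * (2 ^ (d + 1) - 1) ^ card G ^ d * _ := by ring
      _ < 2 ^ ((d + 1) * card G ^ d) * _ := Nat.mul_lt_mul_of_pos_right h Fintype.card_pos
      _ = _ := mul_comm _ _
  refine ⟨χ, fun w b => ?_⟩
  simpa [bad, funext_iff] using hχ (w, b)

lemma mul_sub_one_pow_lt_pow {A X : ℝ} {M : ℕ} (hA : 1 ≤ A) (hX : 0 < X) (hM : M ≠ 0)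
    (h : A * log X ≤ M) : X * (A - 1) ^ M < A ^ M := by
  have hA0 : 0 < A := by linarith
  have hfactor : (A - 1) ^ M = A ^ M * (1 - A⁻¹) ^ M := by
    rw [← mul_pow, mul_sub, mul_inv_cancel₀ hA0.ne', mul_one]
  have hexp : (1 - A⁻¹) ^ M < X⁻¹ :=
    calc (1 - A⁻¹) ^ M < exp (-A⁻¹) ^ M := by
          refine pow_lt_pow_left₀ ?_ (by simpa using inv_le_one_of_one_le₀ hA) hM
          linarith [add_one_lt_exp (neg_ne_zero.2 (inv_ne_zero hA0.ne'))]
      _ = exp (-(M / A)) := by rw [← exp_nat_mul]; ring_nf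
      _ ≤ exp (-log X) := exp_le_exp.2 (by rw [neg_le_neg_iff, le_div_iff₀ hA0]; linarith)
      _ = X⁻¹ := by rw [exp_neg, exp_log hX]
  calc X * (A - 1) ^ M = A ^ M * (X * (1 - A⁻¹) ^ M) := by rw [hfactor]; ring
    _ < A ^ M * (X * X⁻¹) := by gcongr
    _ = A ^ M := by rw [mul_inv_cancel₀ hX.ne', mul_one]

lemma two_pow_mul_le_twentyfive_pow (k : ℕ) : 2 ^ k * (8 * k + 25) ≤ 25 ^ (k + 1) := by
  induction k with
  | zero => norm_num
  | succ k ih =>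
    calc 2 ^ (k + 1) * (8 * (k + 1) + 25) ≤ 25 * (2 ^ k * (8 * k + 25)) := by
          rw [pow_succ]; nlinarith [Nat.zero_le (2 ^ k)]
      _ ≤ 25 ^ (k + 2) := by rw [pow_succ' 25 (k + 1)]; gcongr

lemma two_pow_mul_log_two_add_le_pow {d m : ℕ} {L : ℝ} (hd : 2 ≤ d) (hL : log 2 ≤ L)
    (hm : 25 * L ^ (1 / ((d : ℝ) - 1)) ≤ m) :
    2 ^ (d + 1) * (log 2 + (d + 1) * (m * L)) ≤ (m : ℝ) ^ d := by
  obtain ⟨k, rfl⟩ : ∃ k, d = k + 2 := ⟨d - 2, by omega⟩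
  -- `two_pow_mul_le_twentyfive_pow` is an equality at `k = 0`: this is where `25` comes from.
  have hlog2 : 0.6931471803 < log 2 := log_two_gt_d9
  have hL0 : 0 < L := by linarith
  have he : (1 : ℝ) / ((k + 2 : ℕ) - 1) = 1 / (k + 1 : ℕ) := by push_cast; ring
  rw [he] at hm
  have hLe : log 2 ≤ L ^ (1 / (k + 1 : ℕ) : ℝ) := by
    have he1 : (1 / (k + 1 : ℕ) : ℝ) ≤ 1 := by
      rw [div_le_one (by positivity)]; exact_mod_cast Nat.succ_pos k
    rcases le_or_gt 1 L with hL1 | hL1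
    · linarith [one_le_rpow hL1 (by positivity : (0 : ℝ) ≤ 1 / (k + 1 : ℕ)), log_two_lt_d9]
    · linarith [self_le_rpow_of_le_one hL0.le hL1.le he1]
  have hm8 : 8 ≤ (m : ℝ) := by linarith
  have hpow : 25 ^ (k + 1) * L ≤ (m : ℝ) ^ (k + 1) := by
    calc 25 ^ (k + 1) * L = (25 * L ^ (1 / (k + 1 : ℕ) : ℝ)) ^ (k + 1) := by
          rw [mul_pow, ← rpow_natCast (L ^ _), ← rpow_mul hL0.le,
            one_div_mul_cancel (by positivity), rpow_one]
      _ ≤ (m : ℝ) ^ (k + 1) := by gcongr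
  have hconst : (2 : ℝ) ^ k * (8 * k + 25) ≤ 25 ^ (k + 1) := by
    exact_mod_cast two_pow_mul_le_twentyfive_pow k
  calc 2 ^ (k + 2 + 1) * (log 2 + ((k + 2 : ℕ) + 1) * (m * L))
      = 2 ^ k * (8 * log 2) + 2 ^ k * (8 * k + 24) * (m * L) := by push_cast; ring
    _ ≤ 2 ^ k * (m * L) + 2 ^ k * (8 * k + 24) * (m * L) := by gcongr
    _ = 2 ^ k * (8 * k + 25) * L * m := by ring
    _ ≤ 25 ^ (k + 1) * L * m := by gcongr
    _ ≤ (m : ℝ) ^ (k + 1) * m := by gcongr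
    _ = (m : ℝ) ^ (k + 2) := by ring

lemma two_mul_pow_mul_lt_two_pow {d n m : ℕ} (hd : 2 ≤ d) (hn : 2 ≤ n)
    (hm : 25 * log n ^ (1 / ((d : ℝ) - 1)) ≤ m) :
    2 * (n ^ m) ^ (d + 1) * (2 ^ (d + 1) - 1) ^ m ^ d < 2 ^ ((d + 1) * m ^ d) := by
  have hL : log 2 ≤ log n := log_le_log two_pos (by exact_mod_cast hn)
  have hn0 : (0 : ℝ) < n := by positivity
  have hm0 : m ≠ 0 := by
    rintro rfl
    have := rpow_pos_of_pos (log_pos (by exact_mod_cast hn : (1 : ℝ) < n)) (1 / ((d : ℝ) - 1))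
    push_cast at hm
    linarith
  have hlogX : log (2 * ((n : ℝ) ^ m) ^ (d + 1)) = log 2 + (d + 1) * (m * log n) := by
    rw [log_mul two_ne_zero (by positivity), log_pow, log_pow]; push_cast; ring
  have key := mul_sub_one_pow_lt_pow (A := 2 ^ (d + 1)) (X := 2 * ((n : ℝ) ^ m) ^ (d + 1))
    (M := m ^ d) (one_le_pow₀ one_le_two) (by positivity) (pow_ne_zero _ hm0)
    (by rw [hlogX]; exact_mod_cast two_pow_mul_log_two_add_le_pow hd hL hm)
  rw [← Nat.cast_lt (α := ℝ)]
  push_cast [Nat.one_le_two_pow]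
  rwa [pow_mul]

/-- Every `(d,n)`-graph admits a 2-coloring `χ` of its edges such that, with
`m = ⌈25 (log n)^(1/(d-1))⌉`, every `(d,m)`-subgraph (induced by sets `P i` of `m`
vertices in each part) contains, for each of the two colors, a monochromatic
`(d+1)`-clique of that color. -/
theorem stmt4 (d n : ℕ) (hd : 2 ≤ d) (hn : 2 ≤ n) :
    ∃ χ : Finset (Fin (d+1) × Fin n) → Bool,
      ∀ P : Fin (d+1) → Finset (Fin n),
        (∀ i, (P i).card = ⌈(25 : ℝ) * Real.log n ^ ((1 : ℝ) / ((d : ℝ) - 1))⌉₊) →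
        ∀ b : Bool, ∃ v : Fin (d+1) → Fin n,
          (∀ i, v i ∈ P i) ∧
          ∀ i : Fin (d+1),
            χ ((Finset.univ.image (fun j => (j, v j))).erase (i, v i)) = b := by
  set m := ⌈(25 : ℝ) * Real.log n ^ ((1 : ℝ) / ((d : ℝ) - 1))⌉₊
  have hm : 25 * Real.log n ^ ((1 : ℝ) / ((d : ℝ) - 1)) ≤ m := Nat.le_ceil _
  have : NeZero m := ⟨Nat.ceil_pos.2 (by
    have := log_pos (by exact_mod_cast hn : (1 : ℝ) < n); positivity) |>.ne'⟩
  obtain ⟨χ, hχ⟩ :=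
    exists_coloring_forall_zeroSumClique_monochromatic (G := Fin m) (α := Fin n) (d := d) <| by
    calc 2 * card (Fin m ↪ Fin n) ^ (d + 1) * (2 ^ (d + 1) - 1) ^ card (Fin m) ^ d
        ≤ 2 * (n ^ m) ^ (d + 1) * (2 ^ (d + 1) - 1) ^ m ^ d := by
          simp only [card_embedding_eq, Fintype.card_fin]
          gcongr
          exact Nat.descFactorial_le_pow n m
      _ < 2 ^ ((d + 1) * card (Fin m) ^ d) := by
          rw [Fintype.card_fin]; exact two_mul_pow_mul_lt_two_pow hd hn hm
  refine ⟨χ, fun P hP b => ?_⟩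
  obtain ⟨f, hf⟩ := hχ (fun i => ((P i).orderEmbOfFin (hP i)).toEmbedding) b
  exact ⟨_, fun i => orderEmbOfFin_mem _ _ _, hf⟩
end

section
/- Every (d+1)-partite (d+1)-uniform hypergraph with parts of size n and at least α·n^{d+1} edges (0 < α ≤ 1) contains a complete (d+1)-partite subhypergraph with all parts of size ⌊α (log n)^{1/d}⌋. -/
/-!
Strip the first coordinate: for `x` in the other coordinates let `D x` count the `a` with
`(a, x) ∈ H`. Counting pairs of a `t`-tuple `v` and an `x` with every `(v j, x) ∈ H` gives
`∑ₓ D x ^ t ≥ β^t n^(t+r)` by the power mean inequality, and at most `t (t-1) n^(t-1)` tuples are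
not injective. So if `2 t (t-1) ≤ β^t n`, some injective `v` has at least `β^t/2 · n^r` common
extensions, and we recurse into this common link with density `β^t/2`. Unwinding the recursion,
it suffices that `2^(1 + t + ⋯ + t^(r-1)) t (t-1) ≤ β^(t^r) n`; for `t = ⌊α (log n)^(1/d)⌋` this
follows from `2^(1 + t + ⋯ + t^(d-1)) t (t-1) ≤ e^(t^d) ≤ α^(t^d) n`.
-/

open Finset Function Real

namespace PartiteHypergraph

variable {V : Type*} [Fintype V] [DecidableEq V] {r t : ℕ}

def link (H : Finset (Fin (r + 1) → V)) (x : Fin r → V) : Finset V :=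
  {a | Fin.cons a x ∈ H}

def commonLink (H : Finset (Fin (r + 1) → V)) (v : Fin t → V) : Finset (Fin r → V) :=
  {x | ∀ j, Fin.cons (v j) x ∈ H}

def IsComplete (H : Finset (Fin r → V)) (P : Fin r → Finset V) : Prop :=
  ∀ v : Fin r → V, (∀ i, v i ∈ P i) → v ∈ H

theorem card_eq_sum_card_link (H : Finset (Fin (r + 1) → V)) :
    #H = ∑ x : Fin r → V, #(link H x) := by
  calc #H = ∑ f : Fin (r + 1) → V, if f ∈ H then 1 else 0 := by simp
    _ = ∑ x : Fin r → V, #(link H x) := by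
      rw [← (Fin.consEquiv fun _ => V).sum_comp, Fintype.sum_prod_type, sum_comm]
      simp only [link, card_filter]
      rfl

theorem sum_card_commonLink (H : Finset (Fin (r + 1) → V)) (t : ℕ) :
    ∑ v : Fin t → V, #(commonLink H v) = ∑ x : Fin r → V, #(link H x) ^ t := by
  simp only [commonLink, card_filter]
  rw [sum_comm]
  refine sum_congr rfl fun x _ => ?_
  have : ({v : Fin t → V | ∀ j, Fin.cons (v j) x ∈ H} : Finset _) =
      Fintype.piFinset fun _ => link H x := by
    ext v
    simp [link]
  rw [← card_filter, this, Fintype.card_piFinset, prod_const, card_univ, Fintype.card_fin]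

theorem card_filter_apply_eq_apply_le {j k : Fin t} (hjk : j ≠ k) :
    #{v : Fin t → V | v j = v k} ≤ Fintype.card V ^ (t - 1) := by
  have hinj : Set.InjOn (fun (v : Fin t → V) (i : {i // i ≠ k}) => v i)
      (({v : Fin t → V | v j = v k} : Finset _) : Set _) := by
    intro v hv w hw h
    funext i
    by_cases hi : i = k
    · subst hi
      simp only [coe_filter, mem_univ, true_and, Set.mem_ofPred_eq] at hv hw
      rw [← hv, ← hw]
      exact congrFun h ⟨j, hjk⟩
    · exact congrFun h ⟨i, hi⟩
  calc #{v : Fin t → V | v j = v k}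
      ≤ #(univ : Finset ({i // i ≠ k} → V)) := card_le_card_of_injOn _ (by simp) hinj
    _ = Fintype.card V ^ (t - 1) := by
        simp [Fintype.card_subtype_compl]

theorem card_filter_not_injective_le :
    #{v : Fin t → V | ¬Injective v} ≤ t * (t - 1) * Fintype.card V ^ (t - 1) := by
  have hsub : ({v : Fin t → V | ¬Injective v} : Finset _) ⊆
      (univ : Finset (Fin t)).offDiag.biUnion fun p => {v | v p.1 = v p.2} := by
    intro v hv
    simp only [Injective, mem_filter, mem_univ, true_and, not_forall] at hv
    obtain ⟨a, b, hab, hne⟩ := hv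
    simpa using ⟨a, b, hne, hab⟩
  calc #{v : Fin t → V | ¬Injective v}
      ≤ ∑ p ∈ (univ : Finset (Fin t)).offDiag, #{v : Fin t → V | v p.1 = v p.2} :=
        (card_le_card hsub).trans card_biUnion_le
    _ ≤ ∑ _p ∈ (univ : Finset (Fin t)).offDiag, Fintype.card V ^ (t - 1) :=
        sum_le_sum fun p hp => card_filter_apply_eq_apply_le (mem_offDiag.1 hp).2.2
    _ = t * (t - 1) * Fintype.card V ^ (t - 1) := by
        rw [sum_const, smul_eq_mul, offDiag_card, card_univ, Fintype.card_fin, Nat.mul_sub_one]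

theorem pow_mul_le_sum_card_commonLink [Nonempty V] {β : ℝ} (hβ : 0 ≤ β)
    {H : Finset (Fin (r + 1) → V)} (hH : β * Fintype.card V ^ (r + 1) ≤ #H) (t : ℕ) :
    β ^ t * Fintype.card V ^ (t + r) ≤ ∑ v : Fin t → V, (#(commonLink H v) : ℝ) := by
  have hcast : ∑ v : Fin t → V, (#(commonLink H v) : ℝ) =
      ∑ x : Fin r → V, (#(link H x) : ℝ) ^ t := by
    exact_mod_cast sum_card_commonLink H t
  rw [hcast]
  set n : ℝ := (Fintype.card V : ℝ)
  have hn : 0 < n := by positivity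
  rcases t with _ | t
  · simp [n]
  have hsum : β * n ^ (r + 1) ≤ ∑ x : Fin r → V, (#(link H x) : ℝ) := by
    exact_mod_cast card_eq_sum_card_link H ▸ hH
  have jensen := pow_sum_le_card_mul_sum_pow (s := univ)
    (f := fun x : Fin r → V => (#(link H x) : ℝ)) (fun _ _ => by positivity) t
  rw [card_univ, Fintype.card_fun, Fintype.card_fin, Nat.cast_pow] at jensen
  have hpow : (β * n ^ (r + 1)) ^ (t + 1) = β ^ (t + 1) * n ^ (t + 1 + r) * (n ^ r) ^ t := by
    ring
  refine le_of_mul_le_mul_right ?_ (pow_pos (pow_pos hn r) t)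
  rw [← hpow, mul_comm _ ((n ^ r) ^ t)]
  exact (pow_le_pow_left₀ (by positivity) hsum _).trans jensen

theorem sum_card_commonLink_not_injective_le (H : Finset (Fin (r + 1) → V)) :
    ∑ v ∈ ({v | ¬Injective v} : Finset (Fin t → V)), #(commonLink H v) ≤
      t * (t - 1) * Fintype.card V ^ (t - 1) * Fintype.card V ^ r := by
  calc ∑ v ∈ ({v | ¬Injective v} : Finset (Fin t → V)), #(commonLink H v)
      ≤ ∑ _v ∈ ({v | ¬Injective v} : Finset (Fin t → V)), Fintype.card V ^ r :=
        sum_le_sum fun v _ => by simpa using card_le_univ (commonLink H v)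
    _ ≤ t * (t - 1) * Fintype.card V ^ (t - 1) * Fintype.card V ^ r := by
        rw [sum_const, smul_eq_mul]
        exact Nat.mul_le_mul_right _ card_filter_not_injective_le

theorem exists_injective_le_card_commonLink [Nonempty V] {β : ℝ} (hβ : 0 < β)
    {H : Finset (Fin (r + 1) → V)} (hH : β * Fintype.card V ^ (r + 1) ≤ #H)
    (ht : 2 * (t * (t - 1) : ℕ) ≤ β ^ t * Fintype.card V) :
    ∃ v : Fin t → V, Injective v ∧ β ^ t / 2 * Fintype.card V ^ r ≤ #(commonLink H v) := by
  set n : ℝ := (Fintype.card V : ℝ)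
  have hn : 0 < n := by positivity
  set I : Finset (Fin t → V) := {v | Injective v}
  have hall := pow_mul_le_sum_card_commonLink hβ.le hH t
  have hbad : ∑ v ∈ ({v | ¬Injective v} : Finset (Fin t → V)), (#(commonLink H v) : ℝ) ≤
      β ^ t / 2 * n ^ (t + r) := by
    have hpow : ((t * (t - 1) : ℕ) : ℝ) * n ^ (t - 1) * n = (t * (t - 1) : ℕ) * n ^ t := by
      rcases t with _ | t
      · simp
      · simp [pow_succ, mul_assoc]
    calc ∑ v ∈ ({v | ¬Injective v} : Finset (Fin t → V)), (#(commonLink H v) : ℝ)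
        ≤ (t * (t - 1) : ℕ) * n ^ (t - 1) * n ^ r := by
          simp only [n]
          exact_mod_cast sum_card_commonLink_not_injective_le (t := t) H
      _ = (t * (t - 1) : ℕ) * n ^ t * n ^ r / n := by
          rw [← hpow]
          field_simp
      _ ≤ β ^ t * n / 2 * n ^ t * n ^ r / n := by gcongr; linarith
      _ = β ^ t / 2 * n ^ (t + r) := by
          field_simp
          ring
  have hgood : β ^ t / 2 * n ^ (t + r) ≤ ∑ v ∈ I, (#(commonLink H v) : ℝ) := by
    have := sum_filter_add_sum_filter_not univ (fun v : Fin t → V => Injective v)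
      fun v => (#(commonLink H v) : ℝ)
    linarith
  have hI : I.Nonempty := by
    refine nonempty_of_sum_ne_zero (f := fun v => (#(commonLink H v) : ℝ)) ?_
    exact (lt_of_lt_of_le (by positivity) hgood).ne'
  obtain ⟨v, hv, hle⟩ := exists_le_of_sum_le hI (f := fun _ => β ^ t / 2 * n ^ r)
    (g := fun v => (#(commonLink H v) : ℝ)) <| by
      calc ∑ _v ∈ I, β ^ t / 2 * n ^ r = #I * (β ^ t / 2 * n ^ r) := by
            rw [sum_const, nsmul_eq_mul]
        _ ≤ n ^ t * (β ^ t / 2 * n ^ r) := by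
            gcongr
            simp only [n]
            exact_mod_cast (by simpa using card_le_univ I : #I ≤ Fintype.card V ^ t)
        _ = β ^ t / 2 * n ^ (t + r) := by ring
        _ ≤ _ := hgood
  exact ⟨v, (mem_filter.1 hv).2, hle⟩

theorem IsComplete.cons {H : Finset (Fin (r + 1) → V)} {v : Fin t → V} {P : Fin r → Finset V}
    (hP : IsComplete (commonLink H v) P) :
    IsComplete H (Fin.cons (univ.image v) P : Fin (r + 1) → Finset V) := by
  intro w hw
  obtain ⟨j, -, hj⟩ := mem_image.1 (hw 0)
  have htail : Fin.tail w ∈ commonLink H v := hP _ fun i => hw i.succ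
  simpa [hj] using (mem_filter.1 htail).2 j

theorem exists_isComplete_card_eq [Nonempty V] (t r : ℕ) {β : ℝ} (hβ : 0 < β) (hβ1 : β ≤ 1)
    (H : Finset (Fin (r + 1) → V)) (hH : β * Fintype.card V ^ (r + 1) ≤ #H)
    (hinv : 2 ^ (∑ i ∈ range r, t ^ i) * (t * (t - 1) : ℕ) ≤ β ^ t ^ r * Fintype.card V) :
    ∃ P : Fin (r + 1) → Finset V, (∀ i, #(P i) = t) ∧ IsComplete H P := by
  obtain rfl | ht := Nat.eq_zero_or_pos t
  · exact ⟨fun _ => ∅, fun _ => rfl, fun v hv => absurd (hv 0) (notMem_empty _)⟩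
  induction r generalizing β with
  | zero =>
    simp only [range_zero, sum_empty, pow_zero, one_mul, pow_one, zero_add] at hinv hH
    have htH : t ≤ #H := by
      obtain rfl | ht2 : t = 1 ∨ 2 ≤ t := by omega
      · exact Nat.cast_pos.1 (lt_of_lt_of_le (by positivity) hH)
      · have : t ≤ t * (t - 1) := Nat.le_mul_of_pos_right t (by omega)
        exact_mod_cast ((Nat.cast_le.2 this).trans hinv).trans hH
    obtain ⟨S, hSH, hS⟩ := exists_subset_card_eq htH
    have heval : Injective fun f : Fin 1 → V => f 0 := (Equiv.funUnique (Fin 1) V).injective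
    refine ⟨fun _ => S.image (· 0), fun _ => by rw [card_image_of_injective _ heval, hS], ?_⟩
    intro w hw
    obtain ⟨f, hf, hfw⟩ := mem_image.1 (hw 0)
    exact heval hfw ▸ hSH hf
  | succ r ih =>
    rw [sum_range_succ, pow_add, pow_succ' t r, pow_mul] at hinv
    set γ := β ^ t
    set c : ℝ := ((t * (t - 1) : ℕ) : ℝ)
    have hT : t ^ r ≠ 0 := by positivity
    have hγ1 : γ ≤ 1 := pow_le_one₀ hβ.le hβ1
    have hlink : 2 * c ≤ γ * Fintype.card V := by
      have h2 : (2 : ℝ) ≤ 2 ^ (∑ i ∈ range r, t ^ i) * 2 ^ t ^ r :=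
        (le_self_pow₀ one_le_two hT).trans
          (le_mul_of_one_le_left (by positivity) (one_le_pow₀ one_le_two))
      calc 2 * c ≤ 2 ^ (∑ i ∈ range r, t ^ i) * 2 ^ t ^ r * c := by gcongr
        _ ≤ γ ^ t ^ r * Fintype.card V := hinv
        _ ≤ γ * Fintype.card V := by gcongr; exact pow_le_of_le_one (by positivity) hγ1 hT
    obtain ⟨v, hv, hvH⟩ := exists_injective_le_card_commonLink hβ hH hlink
    obtain ⟨P, hP, hPH⟩ := ih (β := γ / 2) (by positivity) (by linarith) (commonLink H v) hvH <| by
      rw [div_pow, div_mul_eq_mul_div, le_div_iff₀ (by positivity)]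
      linarith
    refine ⟨Fin.cons (univ.image v) P, Fin.cases ?_ hP, hPH.cons⟩
    simp [card_image_of_injective _ hv]

end PartiteHypergraph

theorem two_mul_mul_sub_one_le_exp {x : ℝ} (hx : 2 ≤ x) : 2 * x * (x - 1) ≤ exp x := by
  have log_le (z : ℝ) (hz : 0 < z) : exp 1 * log z ≤ z := by
    simpa [exp_log hz] using exp_one_mul_le_exp (x := log z)
  have he : 2.7182818283 < exp 1 := exp_one_gt_d9
  have hl2 : log 2 < 0.6931471808 := log_two_lt_d9
  rw [← log_le_iff_le_exp (by nlinarith), log_mul (by positivity) (by linarith),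
    log_mul (by norm_num) (by positivity)]
  have h1 := log_le x (by positivity)
  have h2 := log_le (x - 1) (by linarith)
  have h3 : exp 1 * log 2 ≤ exp 1 * 0.6931471808 := by gcongr
  nlinarith

theorem geom_sum_add_le {t d : ℕ} (ht : 2 ≤ t) (hd : d ≠ 0) :
    ∑ i ∈ range d, t ^ i + t ≤ t ^ d + 1 := by
  induction d with
  | zero => exact absurd rfl hd
  | succ d ih =>
    rcases Nat.eq_zero_or_pos d with rfl | hd'
    · simp [add_comm]
    have := ih hd'.ne'
    have : 2 * t ^ d ≤ t ^ d * t := by rw [mul_comm]; exact Nat.mul_le_mul_left _ ht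
    rw [sum_range_succ, pow_succ]
    omega

theorem two_pow_geom_sum_mul_le_exp (t : ℕ) {d : ℕ} (hd : d ≠ 0) :
    (2 : ℝ) ^ (∑ i ∈ range d, t ^ i) * (t * (t - 1) : ℕ) ≤ exp (t ^ d) := by
  obtain ht | ht : t ≤ 1 ∨ 2 ≤ t := le_or_gt t 1
  · have : t * (t - 1) = 0 := by interval_cases t <;> rfl
    simp only [this, Nat.cast_zero, mul_zero]
    positivity
  have ht' : (2 : ℝ) ≤ t := by exact_mod_cast ht
  have htd : t ≤ t ^ d := Nat.le_self_pow hd t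
  have hE := geom_sum_add_le ht hd
  have two_pow_le_exp (m : ℕ) : (2 : ℝ) ^ m ≤ exp m := by
    rw [← exp_one_pow]
    gcongr
    linarith [add_one_le_exp (1 : ℝ)]
  calc (2 : ℝ) ^ (∑ i ∈ range d, t ^ i) * (t * (t - 1) : ℕ)
      ≤ 2 ^ (t ^ d - t + 1) * (t * (t - 1)) := by
        push_cast [Nat.cast_sub (by omega : 1 ≤ t)]
        exact mul_le_mul_of_nonneg_right (pow_le_pow_right₀ (by norm_num) (by omega))
          (by nlinarith)
    _ = 2 ^ (t ^ d - t) * (2 * t * (t - 1)) := by ring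
    _ ≤ exp ↑(t ^ d - t) * exp t :=
        mul_le_mul (two_pow_le_exp _) (two_mul_mul_sub_one_le_exp ht')
          (by nlinarith) (by positivity)
    _ = exp (t ^ d) := by
        rw [← exp_add]
        push_cast [htd]
        ring_nf

theorem exp_pow_le_pow_mul_exp_pow {t d : ℕ} {α y : ℝ} (ht : 0 < t) (hα : 0 < α) (hα1 : α ≤ 1)
    (hty : t ≤ α * y) (hd : d ≠ 0) : exp (t ^ d) ≤ α ^ t ^ d * exp (y ^ d) := by
  have ht' : (0 : ℝ) < t := by exact_mod_cast ht
  have hy : 0 < y := pos_of_mul_pos_right (ht'.trans_le hty) hα.le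
  have hyt : (t : ℝ) ≤ y := hty.trans (by nlinarith)
  set s := y / t
  have hs : 1 ≤ s := (one_le_div ht').2 hyt
  have hlogα : -log α ≤ log s := by
    have : log (t / y) ≤ log α := log_le_log (by positivity) ((div_le_iff₀ hy).2 (by linarith))
    rw [log_div ht'.ne' hy.ne'] at this
    rw [log_div hy.ne' ht'.ne']
    linarith
  have hlogs : 1 + log s ≤ s ^ d := by
    linarith [log_le_sub_one_of_pos (zero_lt_one.trans_le hs), le_self_pow₀ hs hd]
  have hys : y ^ d = t ^ d * s ^ d := by
    rw [← mul_pow, mul_div_cancel₀ _ ht'.ne']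
  have htd : (0 : ℝ) < t ^ d := by positivity
  calc exp (t ^ d) ≤ exp (t ^ d * log α + y ^ d) := by
        gcongr
        rw [hys]
        nlinarith
    _ = α ^ t ^ d * exp (y ^ d) := by
        rw [exp_add, ← log_rpow hα, exp_log (by positivity)]
        norm_cast

/-- Nikiforov's explicit Kővári–Sós–Turán-type estimate: every `(d+1)`-partite
`(d+1)`-uniform hypergraph with parts of size `n` (edges being transversals
`v : Fin (d+1) → Fin n`) having at least `α·n^(d+1)` edges, `0 < α ≤ 1`, contains a
complete `(d+1)`-partite subhypergraph with all parts of size `⌊α (log n)^(1/d)⌋`. -/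
theorem stmt6 (d n : ℕ) (hd : 1 ≤ d) (α : ℝ) (hα : 0 < α) (hα1 : α ≤ 1)
    (H : Finset (Fin (d+1) → Fin n)) (hH : α * (n : ℝ) ^ (d+1) ≤ H.card) :
    ∃ P : Fin (d+1) → Finset (Fin n),
      (∀ i, (P i).card = ⌊α * Real.log n ^ ((1 : ℝ) / d)⌋₊) ∧
      ∀ v : Fin (d+1) → Fin n, (∀ i, v i ∈ P i) → v ∈ H := by
  have hd0 : d ≠ 0 := by omega
  set y := Real.log n ^ ((1 : ℝ) / d)
  set t := ⌊α * y⌋₊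
  obtain ht | ht := Nat.eq_zero_or_pos t
  · exact ⟨fun _ => ∅, by simp [ht], fun v hv => absurd (hv 0) (notMem_empty _)⟩
  have hy : 0 ≤ y := rpow_nonneg (log_natCast_nonneg n) _
  have hty : (t : ℝ) ≤ α * y := Nat.floor_le (by positivity)
  have hyd : y ^ d = Real.log n := by
    simpa only [y, one_div] using rpow_inv_natCast_pow (log_natCast_nonneg n) hd0
  have hn : 0 < n := by
    refine Nat.pos_of_ne_zero fun hn => ?_
    simp [y, t, hn, zero_rpow (inv_ne_zero (Nat.cast_ne_zero.2 hd0))] at ht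
  have : Nonempty (Fin n) := ⟨⟨0, hn⟩⟩
  refine PartiteHypergraph.exists_isComplete_card_eq t d hα hα1 H (by simpa using hH) ?_
  calc (2 : ℝ) ^ (∑ i ∈ range d, t ^ i) * (t * (t - 1) : ℕ) ≤ exp (t ^ d) :=
        two_pow_geom_sum_mul_le_exp t hd0
    _ ≤ α ^ t ^ d * exp (y ^ d) := exp_pow_le_pow_mul_exp_pow ht hα hα1 hty hd0
    _ = α ^ t ^ d * Fintype.card (Fin n) := by
        rw [hyd, exp_log (by positivity), Fintype.card_fin]
end
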